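/- A weakly connected circuit-free digraph Γ is quasi-strongly connected (has a root, i.e., a node from which every other node is reachable by a directed path) if and only if every maximal spanning forest of Γ is an arborescence. -/

import Mathlib

open scoped Classical
open Finset

section Preamble

variable {V : Type*} [Fintype V] [DecidableEq V]

/-- Adjacency relation of a digraph given by its arc set. -/
def Adj (A : Finset (V × V)) (i j : V) : Prop := (i, j) ∈ A

/-- A digraph is circuit-free if it contains no directed cycle. -/
def CircuitFree (A : Finset (V × V)) : Prop :=
  ∀ i : V, ¬ Relation.TransGen (Adj A) i i

/-- In-degree of a node. -/
def inDeg (A : Finset (V × V)) (j : V) : ℕ :=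
  (A.filter (fun a => a.2 = j)).card

/-- Weak connectivity (chains, ignoring orientation). -/
def WConn (A : Finset (V × V)) (i j : V) : Prop :=
  Relation.ReflTransGen (fun a b => (a, b) ∈ A ∨ (b, a) ∈ A) i j

/-- The weakly connected component of `i`, as a finset. -/
noncomputable def compF (A : Finset (V × V)) (i : V) : Finset V :=
  Finset.univ.filter (fun j => WConn A i j)

/-- `IsPath A p` : `p` is a (nonempty) directed path along arcs of `A`. -/
def IsPath (A : Finset (V × V)) : List V → Prop
  | [] => False
  | [_] => True
  | i :: j :: l => (i, j) ∈ A ∧ IsPath A (j :: l)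

/-- The digraph `A` restricted to the node set `K` is an arborescence:
there is a root `r ∈ K` with a unique directed path from `r` to every node of `K`. -/
def IsArbOn (A : Finset (V × V)) (K : Set V) : Prop :=
  ∃ r ∈ K, ∀ i ∈ K, ∃! p : List V,
    IsPath A p ∧ p.head? = some r ∧ p.getLast? = some i

/-- A forest: every weakly connected component is an arborescence. -/
def IsForest (A : Finset (V × V)) : Prop :=
  ∀ i : V, IsArbOn A {j | WConn A i j}

/-- `F` is a maximal spanning forest of the digraph `A`. -/
def IsMaxSpanningForest (A F : Finset (V × V)) : Prop :=
  F ⊆ A ∧ IsForest F ∧ ∀ a ∈ A, a ∉ F → ¬ IsForest (insert a F)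

/-- The collection of all maximal spanning forests of `A`. -/
noncomputable def maxForests (A : Finset (V × V)) : Finset (Finset (V × V)) :=
  A.powerset.filter (fun F => IsMaxSpanningForest A F)

/-- `S̄_F(i)` : the node `i` together with all its successors in `F`. -/
noncomputable def succSet (F : Finset (V × V)) (i : V) : Finset V :=
  Finset.univ.filter (fun j => Relation.ReflTransGen (Adj F) i j)

/-- `Ŝ_F(i)` : the immediate successors of `i` in `F`. -/
noncomputable def immSucc (F : Finset (V × V)) (i : V) : Finset V :=
  Finset.univ.filter (fun j => (i, j) ∈ F)

/-- Marginal contribution of player `i` with respect to the forest `F`. -/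
noncomputable def marg (v : Finset V → ℝ) (F : Finset (V × V)) (i : V) : ℝ :=
  v (succSet F i) - ∑ j ∈ immSucc F i, v (succSet F j)

/-- The Average Forest leadership measure. -/
noncomputable def AF (v : Finset V → ℝ) (A : Finset (V × V)) (i : V) : ℝ :=
  (∑ F ∈ maxForests A, marg v F i) / (maxForests A).card

/-- The node sets of the arborescence components of a forest `F`. -/
noncomputable def comps (F : Finset (V × V)) : Finset (Finset V) :=
  Finset.univ.image (fun i => compF F i)

/-- Productivity of the organisational situation. -/
noncomputable def Productivity (v : Finset V → ℝ) (A : Finset (V × V)) : ℝ :=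
  (∑ F ∈ maxForests A, ∑ K ∈ comps F, v K) / (maxForests A).card

/-- Superadditivity of a TU game. -/
def Superadditive (v : Finset V → ℝ) : Prop :=
  ∀ S Q : Finset V, Disjoint S Q → v S + v Q ≤ v (S ∪ Q)

/-- Weak connectedness of the digraph. -/
def WeaklyConnected (A : Finset (V × V)) : Prop :=
  ∀ i j : V, WConn A i j

/-- Quasi-strong connectedness: existence of a root reaching every node. -/
def HasRoot (A : Finset (V × V)) : Prop :=
  ∃ r : V, ∀ i : V, Relation.ReflTransGen (Adj A) r i

end Preamble

/-!
A circuit-free digraph is a forest exactly when every in-degree is at most 1.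
Hence, in a maximal spanning forest `F` of a circuit-free digraph `A`, every node entered by an arc
of `A` is entered by an arc of `F`, for otherwise that arc could be added to `F`. So the sources
of `F` are sources of `A`. If `A` has a root `r`, then `r` is the only source of `A`; as every node
is reachable in `F` from a source of `F`, all of `F` hangs from `r`. Conversely, maximal spanning
forests exist, and the root of one that is an arborescence is a root of `A`.
-/

namespace List

theorem IsChain.transGen_of_getLast? {α : Type*} {R : α → α → Prop} {a b z : α} {l : List α}
    (h : IsChain R (a :: b :: l)) (hz : (a :: b :: l).getLast? = some z) :
    Relation.TransGen R a z := by
  rw [isChain_cons_cons] at h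
  refine Relation.TransGen.head' h.1 (relationReflTransGen_of_exists_isChain_cons l h.2 ?_)
  rw [getLast?_cons_cons, getLast?_eq_some_getLast (cons_ne_nil _ _)] at hz
  exact Option.some_injective _ hz

theorem IsChain.eq_of_functional {α : Type*} {R : α → α → Prop}
    (hfun : ∀ x y z, R x y → R x z → y = z) (hacyc : ∀ x, ¬ Relation.TransGen R x x) :
    ∀ {l l' : List α}, IsChain R l → IsChain R l' → l.head? = l'.head? →
      l.getLast? = l'.getLast? → l = l'
  | [], l', _, _, hh, _ => (head?_eq_none_iff.1 hh.symm).symm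
  | [a], [], _, _, hh, _ => by simp at hh
  | [a], [_], _, _, hh, _ => by simpa using hh
  | [a], a' :: b :: l', _, h', hh, hl => by
    obtain rfl : a = a' := by simpa using hh
    exact absurd (h'.transGen_of_getLast? hl.symm) (hacyc a)
  | a :: b :: l, [], _, _, hh, _ => by simp at hh
  | a :: b :: l, [a'], h, _, hh, hl => by
    obtain rfl : a = a' := by simpa using hh
    exact absurd (h.transGen_of_getLast? hl) (hacyc a)
  | a :: b :: l, a' :: b' :: l', h, h', hh, hl => by
    obtain rfl : a = a' := by simpa using hh
    rw [isChain_cons_cons] at h h'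
    obtain rfl := hfun a b b' h.1 h'.1
    rw [eq_of_functional hfun hacyc h.2 h'.2 rfl (by simpa using hl)]

end List

section Digraph

variable {V : Type*} {A F : Finset (V × V)}

theorem isPath_iff_isChain {p : List V} : IsPath F p ↔ p ≠ [] ∧ p.IsChain (Adj F) := by
  induction p with
  | nil => simp [IsPath]
  | cons a l ih =>
    cases l with
    | nil => simp [IsPath]
    | cons b l => simp [IsPath, ih, Adj, List.isChain_cons_cons]

theorem reflTransGen_of_isPath {p : List V} {a b : V} (hp : IsPath F p)
    (ha : p.head? = some a) (hb : p.getLast? = some b) : Relation.ReflTransGen (Adj F) a b := by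
  obtain ⟨hne, hp⟩ := isPath_iff_isChain.1 hp
  obtain ⟨l, rfl⟩ : ∃ l, p = a :: l := by
    obtain ⟨c, l, rfl⟩ := List.exists_cons_of_ne_nil hne
    exact ⟨l, by simpa using ha⟩
  refine List.relationReflTransGen_of_exists_isChain_cons l hp ?_
  rw [List.getLast?_eq_some_getLast (List.cons_ne_nil _ _)] at hb
  exact Option.some_injective _ hb

theorem exists_isPath_of_reflTransGen {a b : V} (h : Relation.ReflTransGen (Adj F) a b) :
    ∃ p, IsPath F p ∧ p.head? = some a ∧ p.getLast? = some b := by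
  obtain ⟨l, hl, rfl⟩ := List.exists_isChain_cons_of_relationReflTransGen h
  exact ⟨a :: l, isPath_iff_isChain.2 ⟨List.cons_ne_nil _ _, hl⟩, rfl,
    List.getLast?_eq_some_getLast _⟩

theorem inDeg_le_one_iff [DecidableEq V] {j : V} :
    inDeg F j ≤ 1 ↔ ∀ y z, (y, j) ∈ F → (z, j) ∈ F → y = z := by
  simp only [inDeg, Finset.card_le_one, Finset.mem_filter, and_imp, Prod.forall]
  constructor
  · intro h y z hy hz
    simpa using h y j hy rfl z j hz rfl
  · rintro h y _ hy rfl z _ hz rfl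
    rw [h y z hy hz]

theorem CircuitFree.mono (hFA : F ⊆ A) (hA : CircuitFree A) : CircuitFree F :=
  fun i hi => hA i (Relation.TransGen.mono (fun _ _ h => hFA h) _ _ hi)

theorem CircuitFree.exists_source [Finite V] (hF : CircuitFree F) (i : V) :
    ∃ r, (∀ z, (z, r) ∉ F) ∧ Relation.ReflTransGen (Adj F) r i := by
  have : Std.Irrefl (Relation.TransGen (Adj F)) := ⟨hF⟩
  obtain ⟨r, hri, hmin⟩ := (Finite.wellFounded_of_trans_of_irrefl
    (Relation.TransGen (Adj F))).has_min {z | Relation.ReflTransGen (Adj F) z i} ⟨i, .refl⟩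
  exact ⟨r, fun z hz => hmin z (Relation.ReflTransGen.head hz hri) (.single hz), hri⟩

theorem isPath_unique [DecidableEq V] (hF : CircuitFree F) (hD : ∀ j, inDeg F j ≤ 1)
    {p q : List V} (hp : IsPath F p) (hq : IsPath F q) (hh : p.head? = q.head?)
    (hl : p.getLast? = q.getLast?) : p = q := by
  -- read backwards, a path follows the unique in-arcs
  rw [isPath_iff_isChain] at hp hq
  have hfun : ∀ x y z, Function.swap (Adj F) x y → Function.swap (Adj F) x z → y = z :=
    fun x y z hy hz => inDeg_le_one_iff.1 (hD x) y z hy hz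
  have hacyc : ∀ x, ¬ Relation.TransGen (Function.swap (Adj F)) x x :=
    fun x hx => hF x hx.swap
  simpa using List.IsChain.eq_of_functional hfun hacyc (List.isChain_reverse.2 hp.2)
    (List.isChain_reverse.2 hq.2) (by simpa using hl) (by simpa using hh)

theorem existsUnique_isPath [DecidableEq V] (hF : CircuitFree F) (hD : ∀ j, inDeg F j ≤ 1)
    {a b : V} (h : Relation.ReflTransGen (Adj F) a b) :
    ∃! p, IsPath F p ∧ p.head? = some a ∧ p.getLast? = some b := by
  obtain ⟨p, hp⟩ := exists_isPath_of_reflTransGen h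
  exact ⟨p, hp, fun q hq => isPath_unique hF hD hq.1 hp.1 (hq.2.1.trans hp.2.1.symm)
    (hq.2.2.trans hp.2.2.symm)⟩

theorem IsPath.concat {p : List V} {y i : V} (hp : IsPath F p) (hy : p.getLast? = some y)
    (hyi : (y, i) ∈ F) : IsPath F (p ++ [i]) := by
  rw [isPath_iff_isChain] at hp ⊢
  refine ⟨by simp, hp.2.append (List.isChain_singleton i) ?_⟩
  simp only [hy, Option.mem_def, Option.some.injEq, List.head?_cons]
  rintro _ rfl _ rfl
  exact hyi

theorem reflTransGen_of_wConn [DecidableEq V] (hD : ∀ j, inDeg F j ≤ 1) {r i j : V}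
    (hr : ∀ z, (z, r) ∉ F) (hri : Relation.ReflTransGen (Adj F) r i) (hij : WConn F i j) :
    Relation.ReflTransGen (Adj F) r j := by
  induction hij with
  | refl => exact hri
  | @tail k l _ hstep ih =>
    rcases hstep with hkl | hlk
    · exact ih.tail hkl
    · -- `(l, k)` is the only arc into `k`, so it ends every path from `r` to `k`
      rcases ih.cases_tail with rfl | ⟨w, hw, hwk⟩
      · exact absurd hlk (hr l)
      · rwa [inDeg_le_one_iff.1 (hD k) w l hwk hlk] at hw

theorem isForest_of_circuitFree [Finite V] [DecidableEq V] (hF : CircuitFree F)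
    (hD : ∀ j, inDeg F j ≤ 1) : IsForest F := by
  intro i
  obtain ⟨r, hr, hri⟩ := hF.exists_source i
  refine ⟨r, Relation.ReflTransGen.mono (fun _ _ h => Or.inr h) _ _ hri.swap, fun j hj => ?_⟩
  exact existsUnique_isPath hF hD (reflTransGen_of_wConn hD hr hri hj)

theorem IsForest.inDeg_le_one [DecidableEq V] (hF : IsForest F) (j : V) : inDeg F j ≤ 1 := by
  rw [inDeg_le_one_iff]
  intro y z hy hz
  obtain ⟨r, -, hpaths⟩ := hF j
  obtain ⟨py, ⟨hpy, hpyr, hpyy⟩, -⟩ := hpaths y (.single (Or.inr hy))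
  obtain ⟨pz, ⟨hpz, hpzr, hpzz⟩, -⟩ := hpaths z (.single (Or.inr hz))
  have hpyz : py ++ [j] = pz ++ [j] := (hpaths j .refl).unique
    ⟨hpy.concat hpyy hy, by simp [List.head?_append, hpyr], by simp⟩
    ⟨hpz.concat hpzz hz, by simp [List.head?_append, hpzr], by simp⟩
  rw [List.append_cancel_right hpyz, hpzz] at hpyy
  exact Option.some_injective _ hpyy.symm

theorem HasRoot.mono (hFA : F ⊆ A) (hF : HasRoot F) : HasRoot A :=
  let ⟨r, hr⟩ := hF
  ⟨r, fun i => Relation.ReflTransGen.mono (fun _ _ h => hFA h) _ _ (hr i)⟩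

theorem IsArbOn.hasRoot (hF : IsArbOn F Set.univ) : HasRoot F := by
  obtain ⟨r, -, hr⟩ := hF
  refine ⟨r, fun i => ?_⟩
  obtain ⟨p, ⟨hp, hpr, hpi⟩, -⟩ := hr i (Set.mem_univ i)
  exact reflTransGen_of_isPath hp hpr hpi

theorem HasRoot.isArbOn_univ [DecidableEq V] (hF : CircuitFree F) (hD : ∀ j, inDeg F j ≤ 1)
    (hroot : HasRoot F) : IsArbOn F Set.univ :=
  let ⟨r, hr⟩ := hroot
  ⟨r, Set.mem_univ r, fun i _ => existsUnique_isPath hF hD (hr i)⟩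

theorem mem_maxForests [DecidableEq V] : F ∈ maxForests A ↔ IsMaxSpanningForest A F := by
  simp only [maxForests, mem_filter, mem_powerset, and_iff_right_iff_imp]
  exact fun h => h.1

theorem exists_isMaxSpanningForest [Finite V] [DecidableEq V] (A : Finset (V × V)) :
    ∃ F, IsMaxSpanningForest A F := by
  have hempty : IsForest (∅ : Finset (V × V)) :=
    isForest_of_circuitFree (fun i hi => by simpa [Adj] using Relation.TransGen.head'_iff.1 hi)
      (fun j => by simp [inDeg])
  obtain ⟨F, hF, hmax⟩ := Finset.exists_maximal (s := A.powerset.filter IsForest)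
    ⟨∅, by simpa using hempty⟩
  simp only [mem_filter, mem_powerset] at hF hmax
  exact ⟨F, hF.1, hF.2, fun a ha haF hins =>
    haF (hmax ⟨insert_subset ha hF.1, hins⟩ (subset_insert a F) (mem_insert_self a F))⟩

theorem IsMaxSpanningForest.exists_mem_of_mem [Finite V] [DecidableEq V] (hA : CircuitFree A)
    (hF : IsMaxSpanningForest A F) {x j : V} (hxj : (x, j) ∈ A) : ∃ y, (y, j) ∈ F := by
  by_contra! hj
  refine hF.2.2 (x, j) hxj (hj x)
    (isForest_of_circuitFree (hA.mono (insert_subset hxj hF.1)) fun k => ?_)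
  rw [inDeg_le_one_iff]
  intro y z hy hz
  simp only [mem_insert, Prod.mk.injEq] at hy hz
  rcases hy with ⟨rfl, rfl⟩ | hy
  · rcases hz with ⟨rfl, -⟩ | hz
    · rfl
    · exact absurd hz (hj z)
  rcases hz with ⟨-, rfl⟩ | hz
  · exact absurd hy (hj y)
  · exact inDeg_le_one_iff.1 (hF.2.1.inDeg_le_one k) y z hy hz

theorem IsMaxSpanningForest.hasRoot [Finite V] [DecidableEq V] (hA : CircuitFree A)
    (hF : IsMaxSpanningForest A F) (hroot : HasRoot A) : HasRoot F := by
  obtain ⟨r, hr⟩ := hroot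
  refine ⟨r, fun i => ?_⟩
  obtain ⟨s, hs, hsi⟩ := (hA.mono hF.1).exists_source i
  rcases (hr s).cases_tail with rfl | ⟨x, -, hxs⟩
  · exact hsi
  · obtain ⟨y, hy⟩ := hF.exists_mem_of_mem hA hxs
    exact absurd hy (hs y)

end Digraph

theorem hasRoot_iff_all_maxForests_arborescence_general {V : Type*} [Fintype V] [DecidableEq V]
    (A : Finset (V × V)) (hA : CircuitFree A) :
    HasRoot A ↔ ∀ F ∈ maxForests A, IsArbOn F Set.univ := by
  constructor
  · intro hroot F hF
    rw [mem_maxForests] at hF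
    exact (hF.hasRoot hA hroot).isArbOn_univ (hA.mono hF.1) hF.2.1.inDeg_le_one
  · intro hall
    obtain ⟨F, hF⟩ := exists_isMaxSpanningForest A
    exact (hall F (mem_maxForests.2 hF)).hasRoot.mono hF.1

/-- a weakly connected circuit-free digraph is quasi-strongly connected
(has a root) iff every maximal spanning forest of it is an arborescence. -/
theorem hasRoot_iff_all_maxForests_arborescence {V : Type*} [Fintype V] [DecidableEq V]
    [Nonempty V] (A : Finset (V × V)) (hA : CircuitFree A) (hw : WeaklyConnected A) :
    HasRoot A ↔ ∀ F ∈ maxForests A, IsArbOn F Set.univ :=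
  hasRoot_iff_all_maxForests_arborescence_general A hA
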